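/- Let t0 < T, θ ∈ (0,1), γ > 0, b > 0, x0 ∈ ℝ, and let f : [t0,T] × ℝ → ℝ be continuous and satisfy |f(t,y1) − f(t,y2)| ≤ A|y1 − y2| for all t ∈ [t0,T] and y1, y2 ∈ ℝ, with A > 0. Define, for continuous x : [t0,T] → ℝ, (Υx)(t) = x0 + ((1−θ)/b) f(t, x(t)) + Σ_{i=1}^∞ C(γ,i) θ^i / (b (1−θ)^{i−1} Γ(iθ)) ∫_{t0}^t (t−s)^{iθ−1} f(s, x(s)) ds. Then for all continuous x1, x2 : [t0,T] → ℝ and all t ∈ [t0,T], |(Υx1)(t) − (Υx2)(t)| ≤ C2(T,A) · sup_{s ∈ [t0,T]} |x1(s) − x2(s)|, where C2(T,A) = (A/b)[(1−θ) + Σ_{i=1}^∞ |C(γ,i)| θ^i (T−t0)^{iθ} / ((1−θ)^{i−1} Γ(iθ+1))]. -/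

import Mathlib

open Real MeasureTheory Set

/-- Generalized binomial coefficient `C(γ, i) = γ(γ-1)⋯(γ-i+1)/i!`. -/
noncomputable def genBinom (γ : ℝ) (i : ℕ) : ℝ :=
  (∏ j ∈ Finset.range i, (γ - j)) / (Nat.factorial i : ℝ)

/-- Rising factorial `(ρ)_k = ρ(ρ+1)⋯(ρ+k-1)`. -/
noncomputable def risingFac (ρ : ℝ) (k : ℕ) : ℝ :=
  ∏ j ∈ Finset.range k, (ρ + j)

/-- Generalized Mittag-Leffler function `E_{θ,β}^ρ(λ, z)`
(terms with `Γ` at a pole vanish since `Real.Gamma` is `0` there). -/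
noncomputable def mittagLeffler (θ β ρ lam z : ℝ) : ℝ :=
  ∑' k : ℕ, lam ^ k * z ^ ((k : ℝ) * θ + β - 1) * risingFac ρ k /
    (Real.Gamma ((k : ℝ) * θ + β) * (Nat.factorial k : ℝ))

/-- Generalized AB fractional integral `(I^{θ,μ,γ} η)(t)` starting at `t0`,
with normalization constant `b = B(θ) > 0`. -/
noncomputable def ABIntegral (t0 b θ μ γ : ℝ) (η : ℝ → ℝ) (t : ℝ) : ℝ :=
  ∑' i : ℕ, genBinom γ i * θ ^ i /
      (b * (1 - θ) ^ ((i : ℝ) - 1) * Real.Gamma ((i : ℝ) * θ + 1 - μ)) *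
    ∫ s in t0..t, (t - s) ^ ((i : ℝ) * θ - μ) * η s

/-- Generalized ABC fractional derivative `(D^{θ,μ,γ} f)(t)` starting at `t0`,
with `λ = -θ/(1-θ)` and normalization constant `b = B(θ) > 0`. -/
noncomputable def ABCDeriv (t0 b θ μ γ : ℝ) (f : ℝ → ℝ) (t : ℝ) : ℝ :=
  (b / (1 - θ)) * ∫ s in t0..t, mittagLeffler θ μ γ (-θ / (1 - θ)) (t - s) * deriv f s

/-- Generalized ABR fractional derivative `(R^{θ,μ,γ} f)(t)` starting at `t0`. -/
noncomputable def ABRDeriv (t0 b θ μ γ : ℝ) (f : ℝ → ℝ) (t : ℝ) : ℝ :=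
  (b / (1 - θ)) *
    deriv (fun u => ∫ s in t0..u, mittagLeffler θ μ γ (-θ / (1 - θ)) (u - s) * f s) t

/-- The contraction constant `C1(T, A)` (case `μ ≠ 1`). -/
noncomputable def C1const (t0 T b θ μ γ A : ℝ) : ℝ :=
  (A / b) * ∑' i : ℕ, |genBinom γ i| * θ ^ i * (T - t0) ^ ((i : ℝ) * θ + 1 - μ) /
    ((1 - θ) ^ ((i : ℝ) - 1) * Real.Gamma ((i : ℝ) * θ + 2 - μ))

/-- The contraction constant `C2(T, A)` (case `μ = 1`). -/
noncomputable def C2const (t0 T b θ γ A : ℝ) : ℝ :=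
  (A / b) * ((1 - θ) +
    ∑' i : ℕ, |genBinom γ (i + 1)| * θ ^ (i + 1) * (T - t0) ^ (((i : ℝ) + 1) * θ) /
      ((1 - θ) ^ (i : ℕ) * Real.Gamma (((i : ℝ) + 1) * θ + 1)))

/-- The operator `Υ` in the case `μ = 1`, whose `i = 0` term reduces to `((1-θ)/b) f(t, x(t))`. -/
noncomputable def UpsilonMuOne (t0 b θ γ x0 : ℝ) (f : ℝ → ℝ → ℝ) (x : ℝ → ℝ) (t : ℝ) : ℝ :=
  x0 + ((1 - θ) / b) * f t (x t) +
    ∑' i : ℕ, genBinom γ (i + 1) * θ ^ (i + 1) /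
        (b * (1 - θ) ^ (i : ℕ) * Real.Gamma (((i : ℝ) + 1) * θ)) *
      ∫ s in t0..t, (t - s) ^ (((i : ℝ) + 1) * θ - 1) * f s (x s)

/-!
Both operators share the constant term, so `Υx₁ - Υx₂` is the `i = 0` term plus the series
applied to `g = f(·, x₁) - f(·, x₂)`, and `|g| ≤ A M` with `M = sup |x₁ - x₂|` by the Lipschitz
condition. In the `i`-th term the kernel integrates to `(t - t₀)^(iθ) / (iθ)` and
`iθ Γ(iθ) = Γ(iθ + 1)`, so that term is at most `A M / b` times the `i`-th term of the series
in `C2`. That series converges: `|C(γ, i)| ≤ (|γ| + 1)^i`, and truncating the Euler integral to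
`(s, ∞)` gives `Γ(x + 1) ≥ s^x e^(-s)` for every `s ≥ 0`, which, for `s` large, dominates the
terms by a geometric series.
-/

lemma abs_genBinom_le (γ : ℝ) (k : ℕ) : |genBinom γ k| ≤ (|γ| + 1) ^ k := by
  have hfac : (0 : ℝ) < k.factorial := by positivity
  rw [genBinom, abs_div, abs_of_pos hfac, div_le_iff₀ hfac, Finset.abs_prod]
  calc ∏ j ∈ Finset.range k, |γ - j|
      ≤ ∏ j ∈ Finset.range k, ((|γ| + 1) * ((j : ℝ) + 1)) := by
        gcongr with j
        calc |γ - j| ≤ |γ| + j := by simpa using abs_sub γ (j : ℝ)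
          _ ≤ (|γ| + 1) * ((j : ℝ) + 1) := by
            nlinarith [abs_nonneg γ, (j.cast_nonneg : (0 : ℝ) ≤ j)]
    _ = (|γ| + 1) ^ k * k.factorial := by
        rw [Finset.prod_mul_distrib, Finset.prod_const, Finset.card_range]
        norm_cast
        rw [Finset.prod_range_add_one_eq_factorial]

lemma rpow_mul_exp_neg_le_Gamma_add_one {x : ℝ} (hx : 0 ≤ x) {s : ℝ} (hs : 0 ≤ s) :
    s ^ x * exp (-s) ≤ Gamma (x + 1) := by
  have hint := Real.GammaIntegral_convergent (s := x + 1) (by linarith)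
  simp only [add_sub_cancel_right] at hint
  rw [Real.Gamma_eq_integral (by linarith), add_sub_cancel_right, ← integral_exp_neg_Ioi,
    ← integral_const_mul]
  calc ∫ t in Ioi s, s ^ x * exp (-t) ≤ ∫ t in Ioi s, exp (-t) * t ^ x := by
        refine setIntegral_mono_on ?_ (hint.mono_set (Ioi_subset_Ioi hs)) measurableSet_Ioi
          fun t ht => ?_
        · exact (integrableOn_exp_neg_Ioi s).const_mul _
        · rw [mul_comm]; gcongr; exact ht.le
    _ ≤ ∫ t in Ioi 0, exp (-t) * t ^ x :=
        setIntegral_mono_set hint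
          ((ae_restrict_iff' measurableSet_Ioi).2 (ae_of_all _ fun t (ht : 0 < t) => by positivity))
          (Ioi_subset_Ioi hs).eventuallyLE

lemma summable_pow_div_Gamma_mul_add_one {θ : ℝ} (hθ : 0 < θ) {r : ℝ} (hr : 0 ≤ r) :
    Summable fun n : ℕ => r ^ n / Gamma (n * θ + 1) := by
  set s := (2 * r + 1) ^ θ⁻¹
  have hsθ : ∀ n : ℕ, s ^ (n * θ) = (2 * r + 1) ^ n := fun n => by
    rw [← Real.rpow_mul (by positivity), mul_comm (n : ℝ), inv_mul_cancel_left₀ hθ.ne',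
      Real.rpow_natCast]
  refine Summable.of_nonneg_of_le (fun n => by positivity) (fun n => ?_)
    ((summable_geometric_of_lt_one (by positivity) ((div_lt_one (by positivity)).2
      (by linarith : r < 2 * r + 1))).mul_left (exp s))
  have hΓ := rpow_mul_exp_neg_le_Gamma_add_one (x := n * θ) (by positivity)
    (s := s) (by positivity)
  rw [hsθ] at hΓ
  calc r ^ n / Gamma (n * θ + 1) ≤ r ^ n / ((2 * r + 1) ^ n * exp (-s)) := by gcongr
    _ = exp s * (r / (2 * r + 1)) ^ n := by rw [exp_neg, div_pow]; field_simp

noncomputable def C2term (t0 T θ γ : ℝ) (i : ℕ) : ℝ :=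
  |genBinom γ (i + 1)| * θ ^ (i + 1) * (T - t0) ^ (((i : ℝ) + 1) * θ) /
    ((1 - θ) ^ (i : ℕ) * Gamma (((i : ℝ) + 1) * θ + 1))

lemma C2const_eq (t0 T b θ γ A : ℝ) :
    C2const t0 T b θ γ A = A / b * ((1 - θ) + ∑' i, C2term t0 T θ γ i) := rfl

lemma summable_C2term {t0 T θ : ℝ} (γ : ℝ) (hθ0 : 0 < θ) (hθ1 : θ < 1) (htT : t0 ≤ T) :
    Summable (C2term t0 T θ γ) := by
  have h1θ : 0 < 1 - θ := by linarith
  have hu : 0 ≤ T - t0 := by linarith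
  set q := (|γ| + 1) * θ * (T - t0) ^ θ / (1 - θ)
  have hq : Summable fun i : ℕ => q ^ (i + 1) / Gamma (((i + 1 : ℕ) : ℝ) * θ + 1) :=
    (summable_nat_add_iff 1).2 (summable_pow_div_Gamma_mul_add_one hθ0 (by positivity))
  refine Summable.of_nonneg_of_le (fun i => by unfold C2term; positivity) (fun i => ?_)
    (hq.mul_left (1 - θ))
  have hnum : |genBinom γ (i + 1)| * θ ^ (i + 1) * (T - t0) ^ (((i : ℝ) + 1) * θ) ≤
      (1 - θ) ^ (i + 1) * q ^ (i + 1) := by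
    rw [← mul_pow, mul_div_cancel₀ _ h1θ.ne', mul_comm _ θ, Real.rpow_mul hu, mul_pow,
      mul_pow, show ((i : ℝ) + 1) = ((i + 1 : ℕ) : ℝ) by push_cast; ring, Real.rpow_natCast]
    gcongr
    exact abs_genBinom_le γ (i + 1)
  have hΓ : 0 < Gamma (((i : ℝ) + 1) * θ + 1) := Gamma_pos_of_pos (by positivity)
  calc C2term t0 T θ γ i ≤ (1 - θ) ^ (i + 1) * q ^ (i + 1) /
        ((1 - θ) ^ (i : ℕ) * Gamma (((i : ℝ) + 1) * θ + 1)) := by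
        unfold C2term; gcongr
    _ = (1 - θ) * (q ^ (i + 1) / Gamma (((i + 1 : ℕ) : ℝ) * θ + 1)) := by
        push_cast; field_simp; ring

lemma intervalIntegrable_sub_rpow {α : ℝ} (t0 t : ℝ) (hα : 0 < α) :
    IntervalIntegrable (fun s => (t - s) ^ (α - 1)) volume t0 t := by
  simpa using ((intervalIntegral.intervalIntegrable_rpow' (a := t - t0) (b := t - t)
    (r := α - 1) (by linarith)).comp_sub_left t)

lemma integral_sub_rpow {α : ℝ} (t0 t : ℝ) (hα : 0 < α) :
    ∫ s in t0..t, (t - s) ^ (α - 1) = (t - t0) ^ α / α := by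
  rw [intervalIntegral.integral_comp_sub_left (fun u => u ^ (α - 1)) t, sub_self,
    integral_rpow (Or.inl (by linarith)), Real.zero_rpow (by linarith), sub_add_cancel]
  ring

lemma intervalIntegrable_sub_rpow_mul {t0 t α : ℝ} {h : ℝ → ℝ} (ht : t0 ≤ t)
    (hα : 0 < α) (hh : ContinuousOn h (Icc t0 t)) :
    IntervalIntegrable (fun s => (t - s) ^ (α - 1) * h s) volume t0 t :=
  (intervalIntegrable_sub_rpow t0 t hα).mul_continuousOn (by rwa [uIcc_of_le ht])

lemma abs_integral_sub_rpow_mul_le {t0 t α : ℝ} {h : ℝ → ℝ} {K : ℝ} (ht : t0 ≤ t)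
    (hα : 0 < α) (hK : ∀ s ∈ Icc t0 t, |h s| ≤ K) :
    |∫ s in t0..t, (t - s) ^ (α - 1) * h s| ≤ K * ((t - t0) ^ α / α) := by
  calc |∫ s in t0..t, (t - s) ^ (α - 1) * h s| ≤ ∫ s in t0..t, (t - s) ^ (α - 1) * K := by
        rw [← Real.norm_eq_abs]
        refine intervalIntegral.norm_integral_le_of_norm_le ht (ae_of_all _ fun s hs => ?_)
          ((intervalIntegrable_sub_rpow t0 t hα).mul_const K)
        have hts : 0 ≤ t - s := sub_nonneg.2 hs.2
        rw [Real.norm_eq_abs, abs_mul, abs_of_nonneg (Real.rpow_nonneg hts _)]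
        exact mul_le_mul_of_nonneg_left (hK s (Ioc_subset_Icc_self hs)) (Real.rpow_nonneg hts _)
    _ = K * ((t - t0) ^ α / α) := by
        rw [intervalIntegral.integral_mul_const, integral_sub_rpow t0 t hα, mul_comm]

noncomputable def upsilonTerm (t0 b θ γ : ℝ) (h : ℝ → ℝ) (t : ℝ) (i : ℕ) : ℝ :=
  genBinom γ (i + 1) * θ ^ (i + 1) / (b * (1 - θ) ^ (i : ℕ) * Gamma (((i : ℝ) + 1) * θ)) *
    ∫ s in t0..t, (t - s) ^ (((i : ℝ) + 1) * θ - 1) * h s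

lemma UpsilonMuOne_eq (t0 b θ γ x0 : ℝ) (f : ℝ → ℝ → ℝ) (x : ℝ → ℝ) (t : ℝ) :
    UpsilonMuOne t0 b θ γ x0 f x t =
      x0 + (1 - θ) / b * f t (x t) + ∑' i, upsilonTerm t0 b θ γ (fun s => f s (x s)) t i :=
  rfl

section
variable {t0 t b θ : ℝ} (γ : ℝ)

lemma abs_upsilonTerm_le (hb : 0 < b) (hθ0 : 0 < θ) (hθ1 : θ < 1) (ht : t0 ≤ t)
    {h : ℝ → ℝ} {K : ℝ} (T : ℝ) (htT : t ≤ T) (hK0 : 0 ≤ K) (hK : ∀ s ∈ Icc t0 t, |h s| ≤ K)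
    (i : ℕ) :
    |upsilonTerm t0 b θ γ h t i| ≤ K / b * C2term t0 T θ γ i := by
  set α := ((i : ℝ) + 1) * θ with hα_def
  have hα : 0 < α := by positivity
  have hcoef : |genBinom γ (i + 1) * θ ^ (i + 1) / (b * (1 - θ) ^ i * Gamma α)| =
      |genBinom γ (i + 1)| * θ ^ (i + 1) / (b * (1 - θ) ^ i * Gamma α) := by
    rw [abs_div, abs_mul, abs_of_pos (by positivity : 0 < θ ^ (i + 1)),
      abs_of_pos (by positivity : 0 < b * (1 - θ) ^ i * Gamma α)]
  calc |upsilonTerm t0 b θ γ h t i|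
      ≤ |genBinom γ (i + 1)| * θ ^ (i + 1) / (b * (1 - θ) ^ i * Gamma α) *
          (K * ((T - t0) ^ α / α)) := by
        rw [upsilonTerm, abs_mul, hcoef]
        refine mul_le_mul_of_nonneg_left ((abs_integral_sub_rpow_mul_le ht hα hK).trans ?_)
          (by positivity)
        gcongr
    _ = K / b * C2term t0 T θ γ i := by
        rw [C2term, ← hα_def, Gamma_add_one hα.ne']
        field_simp

lemma upsilonTerm_sub (hθ0 : 0 < θ) (ht : t0 ≤ t) {h₁ h₂ : ℝ → ℝ}
    (hh₁ : ContinuousOn h₁ (Icc t0 t)) (hh₂ : ContinuousOn h₂ (Icc t0 t)) (i : ℕ) :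
    upsilonTerm t0 b θ γ h₁ t i - upsilonTerm t0 b θ γ h₂ t i =
      upsilonTerm t0 b θ γ (h₁ - h₂) t i := by
  have hα : 0 < ((i : ℝ) + 1) * θ := by positivity
  simp only [upsilonTerm, Pi.sub_apply, mul_sub]
  rw [intervalIntegral.integral_sub (intervalIntegrable_sub_rpow_mul ht hα hh₁)
    (intervalIntegrable_sub_rpow_mul ht hα hh₂), mul_sub]

lemma summable_upsilonTerm (hb : 0 < b) (hθ0 : 0 < θ) (hθ1 : θ < 1) (ht : t0 ≤ t)
    {h : ℝ → ℝ} (hh : ContinuousOn h (Icc t0 t)) :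
    Summable (upsilonTerm t0 b θ γ h t) := by
  obtain ⟨K, hK⟩ := isCompact_Icc.exists_bound_of_continuousOn hh
  have hK0 : 0 ≤ K := (norm_nonneg _).trans (hK t0 ⟨le_rfl, ht⟩)
  exact Summable.of_norm_bounded ((summable_C2term γ hθ0 hθ1 ht).mul_left (K / b))
    (abs_upsilonTerm_le γ hb hθ0 hθ1 ht t le_rfl hK0 hK)

lemma tsum_upsilonTerm_sub (hb : 0 < b) (hθ0 : 0 < θ) (hθ1 : θ < 1) (ht : t0 ≤ t)
    {h₁ h₂ : ℝ → ℝ} (hh₁ : ContinuousOn h₁ (Icc t0 t))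
    (hh₂ : ContinuousOn h₂ (Icc t0 t)) :
    ∑' i, upsilonTerm t0 b θ γ h₁ t i - ∑' i, upsilonTerm t0 b θ γ h₂ t i =
      ∑' i, upsilonTerm t0 b θ γ (h₁ - h₂) t i := by
  rw [← (summable_upsilonTerm γ hb hθ0 hθ1 ht hh₁).tsum_sub
    (summable_upsilonTerm γ hb hθ0 hθ1 ht hh₂)]
  exact tsum_congr (upsilonTerm_sub γ hθ0 ht hh₁ hh₂)

lemma abs_tsum_upsilonTerm_le (hb : 0 < b) (hθ0 : 0 < θ) (hθ1 : θ < 1) (ht : t0 ≤ t)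
    {h : ℝ → ℝ} {K : ℝ} (T : ℝ) (htT : t ≤ T) (hK0 : 0 ≤ K)
    (hK : ∀ s ∈ Icc t0 t, |h s| ≤ K) :
    |∑' i, upsilonTerm t0 b θ γ h t i| ≤ K / b * ∑' i, C2term t0 T θ γ i := by
  rw [← Real.norm_eq_abs]
  exact tsum_of_norm_bounded ((summable_C2term γ hθ0 hθ1 (ht.trans htT)).hasSum.mul_left (K / b))
    (abs_upsilonTerm_le γ hb hθ0 hθ1 ht T htT hK0 hK)

end

theorem upsilon_contraction_estimate_mu_eq_one_general
    (t0 T θ γ b A x0 : ℝ) (hθ0 : 0 < θ) (hθ1 : θ < 1)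
    (hb : 0 < b) (hA : 0 < A)
    (f : ℝ → ℝ → ℝ)
    (hfc : ContinuousOn (fun p : ℝ × ℝ => f p.1 p.2) (Set.Icc t0 T ×ˢ Set.univ))
    (hLip : ∀ t ∈ Set.Icc t0 T, ∀ y1 y2 : ℝ, |f t y1 - f t y2| ≤ A * |y1 - y2|)
    (x1 x2 : ℝ → ℝ)
    (h1c : ContinuousOn x1 (Set.Icc t0 T))
    (h2c : ContinuousOn x2 (Set.Icc t0 T)) :
    ∀ t ∈ Set.Icc t0 T,
      |UpsilonMuOne t0 b θ γ x0 f x1 t - UpsilonMuOne t0 b θ γ x0 f x2 t| ≤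
      C2const t0 T b θ γ A * sSup ((fun s => |x1 s - x2 s|) '' Set.Icc t0 T) := by
  rintro t ⟨ht0, htT⟩
  set M := sSup ((fun s => |x1 s - x2 s|) '' Icc t0 T)
  have hM : ∀ s ∈ Icc t0 T, |x1 s - x2 s| ≤ M := fun s hs =>
    le_csSup ((isCompact_Icc.image_of_continuousOn (h1c.sub h2c).abs).bddAbove) ⟨s, hs, rfl⟩
  have hM0 : 0 ≤ M := (abs_nonneg _).trans (hM t ⟨ht0, htT⟩)
  have hLipM : ∀ s ∈ Icc t0 T, |f s (x1 s) - f s (x2 s)| ≤ A * M := fun s hs =>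
    (hLip s hs _ _).trans (mul_le_mul_of_nonneg_left (hM s hs) hA.le)
  have hsub : Icc t0 t ⊆ Icc t0 T := Icc_subset_Icc_right htT
  have hF : ∀ x : ℝ → ℝ, ContinuousOn x (Icc t0 T) →
      ContinuousOn (fun s => f s (x s)) (Icc t0 t) :=
    fun x hx => (hfc.comp (continuousOn_id.prodMk hx) fun s hs => ⟨hs, mem_univ _⟩).mono hsub
  have hcoef : 0 < (1 - θ) / b := div_pos (sub_pos.2 hθ1) hb
  calc |UpsilonMuOne t0 b θ γ x0 f x1 t - UpsilonMuOne t0 b θ γ x0 f x2 t|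
      = |(1 - θ) / b * (f t (x1 t) - f t (x2 t)) +
          ∑' i, upsilonTerm t0 b θ γ ((fun s => f s (x1 s)) - fun s => f s (x2 s)) t i| := by
        rw [UpsilonMuOne_eq, UpsilonMuOne_eq,
          ← tsum_upsilonTerm_sub γ hb hθ0 hθ1 ht0 (hF x1 h1c) (hF x2 h2c)]
        congr 1
        ring
    _ ≤ (1 - θ) / b * (A * M) + A * M / b * ∑' i, C2term t0 T θ γ i := by
        refine (abs_add_le _ _).trans (add_le_add ?_ ?_)
        · rw [abs_mul, abs_of_pos hcoef]
          exact mul_le_mul_of_nonneg_left (hLipM t ⟨ht0, htT⟩) hcoef.le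
        · exact abs_tsum_upsilonTerm_le γ hb hθ0 hθ1 ht0 T htT (by positivity)
            fun s hs => hLipM s (hsub hs)
    _ = C2const t0 T b θ γ A * M := by
        rw [C2const_eq]
        ring

/-- Contraction estimate for the operator `Υ`, case `μ = 1`. -/
theorem upsilon_contraction_estimate_mu_eq_one
    (t0 T θ γ b A x0 : ℝ) (htT : t0 < T) (hθ0 : 0 < θ) (hθ1 : θ < 1)
    (hγ : 0 < γ) (hb : 0 < b) (hA : 0 < A)
    (f : ℝ → ℝ → ℝ)
    (hfc : ContinuousOn (fun p : ℝ × ℝ => f p.1 p.2) (Set.Icc t0 T ×ˢ Set.univ))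
    (hLip : ∀ t ∈ Set.Icc t0 T, ∀ y1 y2 : ℝ, |f t y1 - f t y2| ≤ A * |y1 - y2|)
    (x1 x2 : ℝ → ℝ)
    (h1c : ContinuousOn x1 (Set.Icc t0 T))
    (h2c : ContinuousOn x2 (Set.Icc t0 T)) :
    ∀ t ∈ Set.Icc t0 T,
      |UpsilonMuOne t0 b θ γ x0 f x1 t - UpsilonMuOne t0 b θ γ x0 f x2 t| ≤
      C2const t0 T b θ γ A * sSup ((fun s => |x1 s - x2 s|) '' Set.Icc t0 T) :=
  upsilon_contraction_estimate_mu_eq_one_general t0 T θ γ b A x0 hθ0 hθ1 hb hA f hfc hLip x1 x2 h1c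
    h2c
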